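/- arXiv:1010.1748 — 5 statements merged into one kernel-verified Lean document; each statement's English description precedes it below -/
import Mathlib

section
/- If a continuous map p : X → Y is shrinkable, then p is a weak Hurewicz fibration: for every topological space A and every homotopy G : I × A → Y with a lift f : A → X of G(0,·), there exists a homotopy K : I × A → X lifting G (p ∘ K = G) such that K(0,·) is fiberwise homotopic over Y to f. -/
open unitInterval

/-- A continuous map `p : X → Y` is shrinkable if it admits a continuous section `s`
together with a fiberwise (over `Y`) homotopy from the identity of `X` to `s ∘ p`. -/
def Shrinkable {X Y : Type} [TopologicalSpace X] [TopologicalSpace Y] (p : C(X, Y)) : Prop :=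
  ∃ (s : C(Y, X)) (H : C(I × X, X)),
    (∀ y, p (s y) = y) ∧ (∀ x, H (0, x) = x) ∧ (∀ x, H (1, x) = s (p x)) ∧
    ∀ t x, p (H (t, x)) = p x

/-- If `p` is shrinkable then `p` is a weak Hurewicz fibration: every homotopy
`G : I × A → Y` with a lift `f` of `G(0,·)` lifts to a homotopy `K` with `p ∘ K = G`
such that `K(0,·)` is fiberwise homotopic over `Y` to `f`. -/
theorem shrinkable_implies_weakHurewiczFibration {X Y : Type}
    [TopologicalSpace X] [TopologicalSpace Y] (p : C(X, Y)) (hp : Shrinkable p) :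
    ∀ (A : Type) [TopologicalSpace A] (G : C(I × A, Y)) (f : C(A, X)),
      (∀ a, p (f a) = G (0, a)) →
      ∃ K : C(I × A, X), (∀ t a, p (K (t, a)) = G (t, a)) ∧
        ∃ L : C(I × A, X), (∀ a, L (0, a) = K (0, a)) ∧ (∀ a, L (1, a) = f a) ∧
          ∀ t a, p (L (t, a)) = p (f a) := by
  obtain ⟨s, H, hs, h0, h1, hfib⟩ := hp
  intro A _ G f hf
  refine ⟨s.comp G, fun t a => hs _, ?_⟩
  refine ⟨⟨fun ta => H (σ ta.1, f ta.2), by continuity⟩, ?_, ?_, ?_⟩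
  · intro a
    simp [h1, hf a]
  · intro a
    simp [h0]
  · intro t a
    exact hfib _ _
end

section
/- Let p : X → Y be a continuous map of topological spaces such that every continuous map i : A → B of topological spaces has the left lifting property with respect to p up to fiberwise homotopy on the top triangle (i.e., p is a weak trivial Hurewicz fibration). Then p is a homotopy equivalence. -/
open unitInterval

/-- `p : X → Y` is a weak trivial Hurewicz fibration: every continuous map `i : A → B`
has the left lifting property with respect to `p` up to fiberwise homotopy on the
top triangle. -/
def IsWeakTrivialHurewiczFibration {X Y : Type} [TopologicalSpace X] [TopologicalSpace Y]
    (p : C(X, Y)) : Prop :=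
  ∀ (A B : Type) [TopologicalSpace A] [TopologicalSpace B]
    (i : C(A, B)) (f : C(A, X)) (g : C(B, Y)), (∀ a, p (f a) = g (i a)) →
    ∃ k : C(B, X), (∀ b, p (k b) = g b) ∧
      ∃ H : C(I × A, X), (∀ a, H (0, a) = f a) ∧ (∀ a, H (1, a) = k (i a)) ∧
        ∀ t a, p (H (t, a)) = p (f a)

/-- A weak trivial Hurewicz fibration is a homotopy equivalence. -/
theorem weakTrivialHurewiczFibration_implies_homotopyEquiv {X Y : Type}
    [TopologicalSpace X] [TopologicalSpace Y] (p : C(X, Y))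
    (hp : IsWeakTrivialHurewiczFibration p) :
    ∃ q : C(Y, X), (p.comp q).Homotopic (ContinuousMap.id Y) ∧
      (q.comp p).Homotopic (ContinuousMap.id X) := by
  obtain ⟨q, hq, H, h0, h1, -⟩ :=
    hp X Y p (ContinuousMap.id X) (ContinuousMap.id Y) (fun a => rfl)
  refine ⟨q, ?_, ?_⟩
  · have : p.comp q = ContinuousMap.id Y := ContinuousMap.ext hq
    rw [this]
  · exact ⟨(ContinuousMap.Homotopy.mk H h0 h1).symm⟩
end

section
/- Let p : X → Y, q : Y → Z be continuous maps and i : A → B a continuous map. If i has the weak left lifting property with respect to p and with respect to q, and p has the weak covering homotopy property for A (i.e., the inclusion A → I × A at time 0 has the weak left lifting property with respect to p), then i has the weak left lifting property with respect to q ∘ p. -/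
open unitInterval

/-- `i : A → B` has the weak left lifting property with respect to `p : X → Y`:
for every strictly commutative square there is a lift of the bottom map whose
restriction along `i` is fiberwise homotopic (over `Y`) to the top map. -/
def HasWLLP {A B X Y : Type} [TopologicalSpace A] [TopologicalSpace B]
    [TopologicalSpace X] [TopologicalSpace Y] (i : C(A, B)) (p : C(X, Y)) : Prop :=
  ∀ (f : C(A, X)) (g : C(B, Y)), (∀ a, p (f a) = g (i a)) →
    ∃ k : C(B, X), (∀ b, p (k b) = g b) ∧
      ∃ H : C(I × A, X), (∀ a, H (0, a) = f a) ∧ (∀ a, H (1, a) = k (i a)) ∧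
        ∀ t a, p (H (t, a)) = p (f a)

/-- The time-zero inclusion `A → I × A`. -/
def timeZeroInclusion (A : Type) [TopologicalSpace A] : C(A, I × A) :=
  ⟨fun a => ((0 : I), a), continuous_const.prodMk continuous_id⟩

/-- Concatenating homotopies that are constant after `r` stays constant after `r`. -/
lemma fiberwise_trans {A X Z : Type} [TopologicalSpace A] [TopologicalSpace X]
    {f g h : C(A, X)} (F : ContinuousMap.Homotopy f g) (G : ContinuousMap.Homotopy g h)
    (r : X → Z) (hF : ∀ t a, r (F (t, a)) = r (f a)) (hG : ∀ t a, r (G (t, a)) = r (f a)) :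
    ∀ t a, r ((F.trans G) (t, a)) = r (f a) := by
  intro t a
  rw [ContinuousMap.Homotopy.trans_apply]
  split
  · exact hF _ _
  · exact hG _ _

/-- If `i` has the weak left lifting property with respect to `p` and with respect to
`q`, and `p` has the weak covering homotopy property for `A`, then `i` has the weak
left lifting property with respect to `q ∘ p`. -/
theorem hasWLLP_comp {A B X Y Z : Type} [TopologicalSpace A] [TopologicalSpace B]
    [TopologicalSpace X] [TopologicalSpace Y] [TopologicalSpace Z]
    (i : C(A, B)) (p : C(X, Y)) (q : C(Y, Z))
    (hip : HasWLLP i p) (hiq : HasWLLP i q)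
    (hwchp : HasWLLP (timeZeroInclusion A) p) :
    HasWLLP i (q.comp p) := by
  intro f g hfg
  -- Step 1 : lift g along q
  obtain ⟨k₁, hk₁, G, hG0, hG1, hGfib⟩ := hiq (p.comp f) g hfg
  -- Step 2 : lift the homotopy G along p, starting at f
  obtain ⟨K, hK, H₁, hH₁0, hH₁1, hH₁fib⟩ := hwchp f G (fun a => hG0 a ▸ rfl)
  -- the maps at time 0 and 1 of K
  set K0 : C(A, X) := K.comp (timeZeroInclusion A) with hK0def
  set f₁ : C(A, X) := K.comp ⟨fun a => ((1 : I), a), continuous_const.prodMk continuous_id⟩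
    with hf₁def
  have hpf₁ : ∀ a, p (f₁ a) = k₁ (i a) := by
    intro a
    have := hK ((1 : I), a)
    simpa [hf₁def] using this.trans (hG1 a)
  -- Step 3 : lift k₁ along p
  obtain ⟨k, hk, H₂, hH₂0, hH₂1, hH₂fib⟩ := hip f₁ k₁ hpf₁
  refine ⟨k, fun b => by simp [hk b, hk₁ b], ?_⟩
  -- package the three homotopies
  let F1 : ContinuousMap.Homotopy f K0 :=
    { toContinuousMap := H₁
      map_zero_left := fun a => hH₁0 a
      map_one_left := fun a => hH₁1 a }
  let F2 : ContinuousMap.Homotopy K0 f₁ :=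
    { toContinuousMap := K
      map_zero_left := fun a => rfl
      map_one_left := fun a => rfl }
  let F3 : ContinuousMap.Homotopy f₁ (k.comp i) :=
    { toContinuousMap := H₂
      map_zero_left := fun a => hH₂0 a
      map_one_left := fun a => hH₂1 a }
  let F : ContinuousMap.Homotopy f (k.comp i) := (F1.trans F2).trans F3
  refine ⟨F.toContinuousMap, fun a => F.map_zero_left a, fun a => F.map_one_left a, ?_⟩
  have fib12 : ∀ t a, (fun x => q (p x)) ((F1.trans F2) (t, a)) = q (p (f a)) := by
    refine fiberwise_trans F1 F2 (fun x => q (p x)) ?_ ?_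
    · intro t a
      show q (p (H₁ (t, a))) = q (p (f a))
      rw [hH₁fib t a]
    · intro t a
      have := hK (t, a)
      show q (p (K (t, a))) = q (p (f a))
      rw [this, hGfib t a]
      rfl
  have fib3 : ∀ t a, (fun x => q (p x)) (F3 (t, a)) = q (p (f a)) := by
    intro t a
    show q (p (H₂ (t, a))) = q (p (f a))
    rw [hH₂fib t a, hpf₁ a, hk₁ (i a), ← hfg a]
    rfl
  have := fiberwise_trans (F1.trans F2) F3 (fun x => q (p x)) fib12 fib3
  intro t a
  exact this t a
end

section
/- Let p : X → Y be a Hurewicz fibration and i : A → B a closed Hurewicz cofibration which is also a homotopy equivalence (a trivial cofibration in the Strøm sense forming a DR pair (B,A)). Then every lifting problem (f : A → X, g : B → Y with p ∘ f = g ∘ i) has a strict solution k : B → X with k ∘ i = f and p ∘ k = g. -/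
open unitInterval

/-- A continuous map `p : E → B` is a Hurewicz fibration if it has the homotopy
lifting property with respect to all topological spaces. -/
def IsHurewiczFibration {E B : Type} [TopologicalSpace E] [TopologicalSpace B]
    (p : C(E, B)) : Prop :=
  ∀ (A : Type) [TopologicalSpace A] (G : C(I × A, B)) (f : C(A, E)),
    (∀ a, p (f a) = G (0, a)) →
    ∃ H : C(I × A, E), (∀ a, H (0, a) = f a) ∧ ∀ t a, p (H (t, a)) = G (t, a)

/-- A continuous map `i : A → B` is a Hurewicz cofibration if it has the homotopy
extension property with respect to all topological spaces. -/
def IsHurewiczCofibration {A B : Type} [TopologicalSpace A] [TopologicalSpace B]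
    (i : C(A, B)) : Prop :=
  ∀ (Z : Type) [TopologicalSpace Z] (f : C(B, Z)) (G : C(I × A, Z)),
    (∀ a, G (0, a) = f (i a)) →
    ∃ G' : C(I × B, Z), (∀ b, G' (0, b) = f b) ∧ ∀ t a, G' (t, i a) = G (t, a)

/-- Strict lifting against trivial closed cofibrations: if `p` is a Hurewicz fibration
and `i : A → B` is a closed Hurewicz cofibration such that `A` is a strong
deformation retract of `B` (a DR pair `(B,A)`), then every lifting problem
`p ∘ f = g ∘ i` has a strict (on-the-nose) solution `k` with `k ∘ i = f` and
`p ∘ k = g`. -/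
theorem fibration_llp_trivialCofibration {A B X Y : Type} [TopologicalSpace A]
    [TopologicalSpace B] [TopologicalSpace X] [TopologicalSpace Y]
    (p : C(X, Y)) (hp : IsHurewiczFibration p)
    (i : C(A, B)) (hclosed : Topology.IsClosedEmbedding i) (hcof : IsHurewiczCofibration i)
    (D : C(I × B, B)) (hD0 : ∀ b, D (0, b) = b) (hD1 : ∀ b, ∃ a, D (1, b) = i a)
    (hDrel : ∀ (t : I) (a : A), D (t, i a) = i a)
    (f : C(A, X)) (g : C(B, Y)) (hfg : ∀ a, p (f a) = g (i a)) :
    ∃ k : C(B, X), (∀ a, k (i a) = f a) ∧ ∀ b, p (k b) = g b := by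
  classical
  -- Step 1: obtain a retraction onto `{0} × B ∪ I × A` from the cofibration property.
  obtain ⟨ρ, hρ0, hρ1⟩ :=
    hcof {z : I × B // z.1 = 0 ∨ z.2 ∈ Set.range i}
      ⟨fun b => ⟨(0, b), Or.inl rfl⟩, by fun_prop⟩
      ⟨fun ta => ⟨(ta.1, i ta.2), Or.inr ⟨ta.2, rfl⟩⟩, by fun_prop⟩
      (fun a => Subtype.ext rfl)
  -- Step 2: the function `u` measuring distance from A.
  have hρ2cont : Continuous fun tb : I × B => (((ρ tb : I × B).1 : I) : ℝ) := by fun_prop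
  let F : C(B × I, ℝ) :=
    ⟨fun q => (q.2 : ℝ) - (((ρ (q.2, q.1) : I × B).1 : I) : ℝ), by fun_prop⟩
  let u0 : B → ℝ := fun b => ‖F.curry b‖
  have hu0cont : Continuous u0 := continuous_norm.comp F.curry.continuous
  have hu0nonneg : ∀ b, 0 ≤ u0 b := fun b => norm_nonneg _
  have hu0le : ∀ b, u0 b ≤ 1 := by
    intro b
    rw [show u0 b = ‖F.curry b‖ from rfl, ContinuousMap.norm_le _ zero_le_one]
    intro t
    have h1 : (0:ℝ) ≤ (t : ℝ) := t.2.1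
    have h2 : (t : ℝ) ≤ 1 := t.2.2
    have h3 : (0:ℝ) ≤ (((ρ (t, b) : I × B).1 : I) : ℝ) := ((ρ (t, b) : I × B).1).2.1
    have h4 : (((ρ (t, b) : I × B).1 : I) : ℝ) ≤ 1 := ((ρ (t, b) : I × B).1).2.2
    have : F.curry b t = (t : ℝ) - (((ρ (t, b) : I × B).1 : I) : ℝ) := rfl
    rw [this, Real.norm_eq_abs, abs_sub_le_iff]
    constructor <;> linarith
  have hu0_zero_iff : ∀ b, u0 b = 0 → ∀ t : I, ((ρ (t, b) : I × B).1 : I) = t := by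
    intro b hb t
    have h : F.curry b = 0 := norm_eq_zero.mp hb
    have h2 : F.curry b t = 0 := by rw [h]; rfl
    have h3 : (t : ℝ) - (((ρ (t, b) : I × B).1 : I) : ℝ) = 0 := h2
    exact Subtype.ext (by linarith)
  -- `u0 b = 0` implies `b ∈ range i`.
  have hu0_range : ∀ b, u0 b = 0 → b ∈ Set.range i := by
    intro b hb
    have hseqI : ∀ n : ℕ, (1 / ((n:ℝ) + 2)) ∈ I := by
      intro n
      constructor
      · positivity
      · rw [div_le_one (by positivity)]; linarith [Nat.cast_nonneg (α := ℝ) n]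
    set s : ℕ → I := fun n => ⟨1 / ((n:ℝ) + 2), hseqI n⟩ with hs
    have hslim : Filter.Tendsto s Filter.atTop (nhds 0) := by
      rw [tendsto_subtype_rng]
      have h2 : Filter.Tendsto (fun n : ℕ => ((n:ℝ) + 2)) Filter.atTop Filter.atTop :=
        Filter.tendsto_atTop_add_const_right _ 2 tendsto_natCast_atTop_atTop
      simpa [hs, one_div, Function.comp_def] using tendsto_inv_atTop_zero.comp h2
    have hmem : ∀ n, ((ρ (s n, b) : I × B).2) ∈ Set.range i := by
      intro n
      rcases (ρ (s n, b)).2 with h | h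
      · exfalso
        have := hu0_zero_iff b hb (s n)
        have h0 : ((ρ (s n, b) : I × B).1 : I) = s n := this
        rw [h] at h0
        have : (0:ℝ) = 1 / ((n:ℝ) + 2) := congrArg Subtype.val h0
        have hpos : (0:ℝ) < 1 / ((n:ℝ) + 2) := by positivity
        linarith
      · exact h
    have hcont : Filter.Tendsto (fun n => ((ρ (s n, b) : I × B).2))
        Filter.atTop (nhds ((ρ ((0:I), b) : I × B).2)) := by
      have : Continuous fun t : I => ((ρ (t, b) : I × B).2) := by fun_prop
      exact (this.tendsto 0).comp hslim
    have hρ0b : ((ρ ((0:I), b) : I × B).2) = b := by rw [hρ0 b]; rfl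
    rw [hρ0b] at hcont
    exact hclosed.isClosed_range.mem_of_tendsto hcont
      (Filter.Eventually.of_forall hmem)
  have hu0_i : ∀ a : A, u0 (i a) = 0 := by
    intro a
    have : F.curry (i a) = 0 := by
      ext t
      have h : ρ (t, i a) = ⟨(t, i a), Or.inr ⟨a, rfl⟩⟩ := hρ1 t a
      show (t : ℝ) - (((ρ (t, i a) : I × B).1 : I) : ℝ) = 0
      rw [h]
      simp
    show ‖F.curry (i a)‖ = 0
    rw [this, norm_zero]
  let u : B → I := fun b => ⟨u0 b, hu0nonneg b, hu0le b⟩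
  have hucont : Continuous u := hu0cont.subtype_mk _
  -- Step 3: the retraction r : B → A.
  choose r hr using hD1
  have hrcont : Continuous r := by
    rw [hclosed.isEmbedding.continuous_iff]
    have : (i ∘ r) = fun b => D (1, b) := funext fun b => (hr b).symm
    rw [this]
    fun_prop
  have hri : ∀ a, r (i a) = a := by
    intro a
    apply hclosed.injective
    rw [← hr (i a), hDrel 1 a]
  -- Step 4: the reparametrized deformation `Dhat`.
  let sg : ℝ → ℝ → I := fun t v => Set.projIcc 0 1 zero_le_one (1 - t / v)
  let Dhat : I × B → B := fun tb =>
    if u0 tb.2 = 0 then tb.2 else D (sg (tb.1 : ℝ) (u0 tb.2), tb.2)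
  have hDhat_cont : Continuous Dhat := by
    rw [continuous_iff_continuousAt]
    rintro ⟨t0, b0⟩
    by_cases h0 : u0 b0 = 0
    · -- tube-lemma argument near points of A
      obtain ⟨a0, ha0⟩ := hu0_range b0 h0
      rw [ContinuousAt, Filter.tendsto_def]
      intro V hV
      have hval : Dhat (t0, b0) = b0 := if_pos h0
      rw [hval] at hV
      obtain ⟨V', hV'sub, hV'open, hbV'⟩ := mem_nhds_iff.mp hV
      have hsub : (Set.univ : Set I) ×ˢ ({b0} : Set B) ⊆ D ⁻¹' V' := by
        rintro ⟨s, b⟩ ⟨-, hbmem⟩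
        have hb : b = b0 := hbmem
        subst hb
        show D (s, b) ∈ V'
        rw [← ha0, hDrel s a0, ha0]
        exact hbV'
      obtain ⟨U, W, -, hWopen, hUuniv, hbW, hUW⟩ :=
        generalized_tube_lemma isCompact_univ isCompact_singleton
          (hV'open.preimage D.continuous) hsub
      apply Filter.mem_of_superset
        (prod_mem_nhds Filter.univ_mem (hWopen.mem_nhds (hbW rfl)))
      rintro ⟨s, b⟩ ⟨-, hbmem⟩
      have hDin : ∀ s' : I, D (s', b) ∈ V' := fun s' =>
        hUW ⟨hUuniv trivial, hbmem⟩
      show Dhat (s, b) ∈ V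
      by_cases hb : u0 b = 0
      · have : Dhat (s, b) = b := if_pos hb
        rw [this, ← hD0 b]
        exact hV'sub (hDin 0)
      · have : Dhat (s, b) = D (sg (s : ℝ) (u0 b), b) := if_neg hb
        rw [this]
        exact hV'sub (hDin _)
    · -- away from A everything is given by a continuous formula
      have hopen : IsOpen {tb : I × B | u0 tb.2 ≠ 0} := by
        have : Continuous fun tb : I × B => u0 tb.2 := hu0cont.comp continuous_snd
        exact isOpen_ne.preimage this
      have heq : ∀ᶠ tb in nhds (t0, b0),
          D (sg (tb.1 : ℝ) (u0 tb.2), tb.2) = Dhat tb := by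
        filter_upwards [hopen.mem_nhds h0] with tb htb
        exact (if_neg htb).symm
      apply ContinuousAt.congr _ heq
      have h1 : ContinuousAt (fun tb : I × B => (1 : ℝ) - (tb.1 : ℝ) / u0 tb.2)
          (t0, b0) := by
        apply ContinuousAt.sub continuousAt_const
        exact ContinuousAt.div
          (continuous_subtype_val.comp continuous_fst).continuousAt
          (hu0cont.comp continuous_snd).continuousAt h0
      exact D.continuous.continuousAt.comp
        (((continuous_projIcc.continuousAt.comp h1).prodMk
          continuous_snd.continuousAt))
  let Ghat : C(I × B, Y) := ⟨fun tb => g (Dhat tb), g.continuous.comp hDhat_cont⟩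
  have hsg0 : ∀ v : ℝ, v ≠ 0 → sg ((0:I) : ℝ) v = 1 := by
    intro v hv
    show Set.projIcc 0 1 zero_le_one (1 - ((0:I):ℝ) / v) = 1
    have : (1:ℝ) - ((0:I):ℝ) / v = 1 := by
      simp
    rw [this, Set.projIcc_right]
    rfl
  have hinit : ∀ b, p ((f.comp ⟨r, hrcont⟩) b) = Ghat (0, b) := by
    intro b
    show p (f (r b)) = g (Dhat (0, b))
    by_cases hb : u0 b = 0
    · obtain ⟨a, ha⟩ := hu0_range b hb
      have : Dhat (0, b) = b := if_pos hb
      rw [this, ← ha, hri a]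
      exact hfg a
    · have : Dhat (0, b) = D (sg ((0:I) : ℝ) (u0 b), b) := if_neg hb
      rw [this, hsg0 (u0 b) hb, hr b, hfg]
  obtain ⟨H, hH0, hHp⟩ := hp B Ghat (f.comp ⟨r, hrcont⟩) hinit
  refine ⟨⟨fun b => H (u b, b), H.continuous.comp (hucont.prodMk continuous_id)⟩,
    ?_, ?_⟩
  · intro a
    show H (u (i a), i a) = f a
    have hua : u (i a) = 0 := Subtype.ext (hu0_i a)
    rw [hua, hH0]
    show f (r (i a)) = f a
    rw [hri]
  · intro b
    show p (H (u b, b)) = g b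
    rw [hHp]
    show g (Dhat (u b, b)) = g b
    by_cases hb : u0 b = 0
    · rw [show Dhat (u b, b) = b from if_pos hb]
    · rw [show Dhat (u b, b) = D (sg ((u b : I) : ℝ) (u0 b), b) from if_neg hb]
      have hsgself : sg ((u b : I) : ℝ) (u0 b) = 0 := by
        show Set.projIcc 0 1 zero_le_one (1 - u0 b / u0 b) = 0
        rw [div_self hb, sub_self, Set.projIcc_left]
        rfl
      rw [hsgself, hD0]
end

section
/- Let p : X → Y be a Hurewicz fibration and i : A → B a closed Hurewicz cofibration. Then every homotopy lifting extension problem has a solution: given F : (I × A) ∪ ({0} × B) → X and G : I × B → Y with p ∘ F equal to the restriction of G, there exists H : I × B → X extending F and lifting G (p ∘ H = G). -/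
open unitInterval

section HLEPAux

open Set Topology MeasureTheory Filter

section Aux

variable {A B : Type} [TopologicalSpace A] [TopologicalSpace B]

/-- The subset `({0} × B) ∪ (I × range i)` of `I × B`. -/
def Mset (i : C(A, B)) : Set (I × B) := {z | z.1 = 0 ∨ z.2 ∈ Set.range i}

noncomputable def pjI (t : ℝ) : I := Set.projIcc 0 1 zero_le_one t

lemma continuous_pjI : Continuous pjI := continuous_projIcc (h := zero_le_one)

lemma pjI_coe {t : ℝ} (h0 : 0 ≤ t) (h1 : t ≤ 1) : (pjI t : ℝ) = t := by
  simp [pjI, Set.projIcc_of_mem, Set.mem_Icc.mpr ⟨h0, h1⟩]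

/-- Strøm-type function measuring how much `r` fails to preserve the first coordinate. -/
noncomputable def uu (r : C(I × B, I × B)) (b : B) : ℝ :=
  ∫ t in (0:ℝ)..1, max (t - ((r (pjI t, b)).1 : ℝ)) 0

lemma uu_integrand_continuous (r : C(I × B, I × B)) :
    Continuous (Function.uncurry fun (b : B) (t : ℝ) =>
      max (t - ((r (pjI t, b)).1 : ℝ)) 0) := by
  apply Continuous.max _ continuous_const
  apply Continuous.sub continuous_snd
  exact continuous_subtype_val.comp (continuous_fst.comp (r.continuous.comp
    ((continuous_pjI.comp continuous_snd).prodMk continuous_fst)))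

lemma uu_continuous (r : C(I × B, I × B)) : Continuous (uu r) := by
  have := uu_integrand_continuous r
  exact intervalIntegral.continuous_parametric_intervalIntegral_of_continuous
    (μ := volume) this continuous_const

lemma uu_nonneg (r : C(I × B, I × B)) (b : B) : 0 ≤ uu r b := by
  apply intervalIntegral.integral_nonneg zero_le_one
  intro t _
  exact le_max_right _ _

lemma uu_eq_zero_of_fix (r : C(I × B, I × B)) (b : B)
    (hfix : ∀ t : I, r (t, b) = (t, b)) : uu r b = 0 := by
  have : ∀ t ∈ Set.uIcc (0:ℝ) 1,
      max (t - ((r (pjI t, b)).1 : ℝ)) 0 = (fun _ => (0:ℝ)) t := by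
    intro t ht
    rw [Set.uIcc_of_le zero_le_one, Set.mem_Icc] at ht
    rw [hfix (pjI t)]
    simp [pjI_coe ht.1 ht.2]
  rw [uu, intervalIntegral.integral_congr this, intervalIntegral.integral_zero]

lemma uu_le_of_eq_zero (r : C(I × B, I × B)) (b : B) (h : uu r b = 0) :
    ∀ t : I, (t : ℝ) ≤ ((r (t, b)).1 : ℝ) := by
  by_contra hcon
  push_neg at hcon
  obtain ⟨t₀, ht₀⟩ := hcon
  set g : ℝ → ℝ := fun t => max (t - ((r (pjI t, b)).1 : ℝ)) 0 with hg
  have hgc : Continuous g := by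
    have := uu_integrand_continuous r
    exact this.comp ((continuous_const (y := b)).prodMk continuous_id)
  have hgnn : ∀ t, 0 ≤ g t := fun t => le_max_right _ _
  have hgpos : 0 < g (t₀ : ℝ) := by
    have : pjI (t₀ : ℝ) = t₀ := by
      apply Subtype.ext; exact pjI_coe t₀.2.1 t₀.2.2
    rw [hg]; simp only [this]
    rw [lt_max_iff]; left; linarith
  have ht₀pos : 0 < (t₀ : ℝ) := lt_of_le_of_lt ((r (t₀, b)).1).2.1 ht₀
  -- find an interval around t₀ where g is positive
  have hopen : IsOpen {t : ℝ | 0 < g t} := isOpen_lt continuous_const hgc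
  obtain ⟨ε, hε, hball⟩ := Metric.isOpen_iff.mp hopen _ hgpos
  set c : ℝ := max (t₀ - ε / 2) 0 with hc
  have hc0 : 0 ≤ c := le_max_right _ _
  have hclt : c < (t₀ : ℝ) := by
    rw [hc, max_lt_iff]; exact ⟨by linarith, ht₀pos⟩
  have hpos_on : ∀ x ∈ Set.Ioo c (t₀ : ℝ), 0 < g x := by
    intro x hx
    apply hball
    rw [Metric.mem_ball, Real.dist_eq, abs_lt]
    have h1 : (t₀:ℝ) - ε / 2 ≤ c := le_max_left _ _
    have h2 := hx.1
    have h3 := hx.2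
    constructor <;> linarith
  have hint : ∀ a b' : ℝ, IntervalIntegrable g volume a b' :=
    fun a b' => hgc.intervalIntegrable a b'
  have h1 : 0 < ∫ x in c..(t₀:ℝ), g x :=
    intervalIntegral.intervalIntegral_pos_of_pos_on (hint _ _) hpos_on hclt
  have h2 : 0 ≤ ∫ x in (0:ℝ)..c, g x :=
    intervalIntegral.integral_nonneg hc0 fun x _ => hgnn x
  have h3 : 0 ≤ ∫ x in (t₀:ℝ)..1, g x :=
    intervalIntegral.integral_nonneg t₀.2.2 fun x _ => hgnn x
  have huu : uu r b = ∫ x in (0:ℝ)..1, g x := rfl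
  have hsplit : uu r b = (∫ x in (0:ℝ)..c, g x) + (∫ x in c..(t₀:ℝ), g x)
      + ∫ x in (t₀:ℝ)..1, g x := by
    rw [huu,
      ← intervalIntegral.integral_add_adjacent_intervals (hint 0 (t₀:ℝ)) (hint (t₀:ℝ) 1),
      ← intervalIntegral.integral_add_adjacent_intervals (hint 0 c) (hint c (t₀:ℝ))]
  rw [h] at hsplit
  linarith

end Aux

section Deform

variable {A B : Type} [TopologicalSpace A] [TopologicalSpace B]

noncomputable def th (r : C(I × B, I × B)) (z : I × B) : ℝ := min (z.1 : ℝ) (uu r z.2)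

lemma th_nonneg (r : C(I × B, I × B)) (z : I × B) : 0 ≤ th r z :=
  le_min z.1.2.1 (uu_nonneg r z.2)

lemma th_le_one (r : C(I × B, I × B)) (z : I × B) : th r z ≤ 1 :=
  le_trans (min_le_left _ _) z.1.2.2

lemma th_continuous (r : C(I × B, I × B)) : Continuous (th r) :=
  (continuous_subtype_val.comp continuous_fst).min ((uu_continuous r).comp continuous_snd)

lemma memI_comb (l t s : I) : (1 - (l : ℝ)) * t + l * s ∈ I :=
  Set.mem_Icc.mpr ⟨add_nonneg (mul_nonneg (by linarith [l.2.2]) t.2.1)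
      (mul_nonneg l.2.1 s.2.1),
    by nlinarith [l.2.1, l.2.2, t.2.1, t.2.2, s.2.1, s.2.2]⟩

noncomputable def Phi (r : C(I × B, I × B)) (q : I × (I × B)) : I × B :=
  (⟨(1 - (q.1 : ℝ)) * (q.2.1 : ℝ) + (q.1 : ℝ) * ((r q.2).1 : ℝ),
      memI_comb q.1 q.2.1 (r q.2).1⟩,
   (r (⟨(q.1 : ℝ) * (q.2.1 : ℝ), unitInterval.mul_mem q.1.2 q.2.1.2⟩, q.2.2)).2)

lemma Phi_continuous (r : C(I × B, I × B)) : Continuous (Phi r) := by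
  have hc1 : Continuous fun q : I × (I × B) => (q.1 : ℝ) :=
    continuous_subtype_val.comp continuous_fst
  have hc2 : Continuous fun q : I × (I × B) => (q.2.1 : ℝ) :=
    continuous_subtype_val.comp (continuous_fst.comp continuous_snd)
  have hc3 : Continuous fun q : I × (I × B) => ((r q.2).1 : ℝ) :=
    continuous_subtype_val.comp (continuous_fst.comp (r.continuous.comp continuous_snd))
  apply Continuous.prodMk
  · exact Continuous.subtype_mk (((continuous_const.sub hc1).mul hc2).add (hc1.mul hc3)) _
  · exact continuous_snd.comp (r.continuous.comp
      ((Continuous.subtype_mk (hc1.mul hc2) _).prodMk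
        (continuous_snd.comp continuous_snd)))

lemma Phi_zero (r : C(I × B, I × B)) (hr0 : ∀ b : B, r (0, b) = (0, b)) (z : I × B) :
    Phi r (0, z) = z := by
  obtain ⟨t, b⟩ := z
  apply Prod.ext
  · apply Subtype.ext
    show (1 - ((0:I) : ℝ)) * t + ((0:I) : ℝ) * _ = (t : ℝ)
    simp
  · show (r (⟨((0:I) : ℝ) * (t : ℝ), _⟩, b)).2 = b
    have : (⟨((0:I) : ℝ) * (t : ℝ), unitInterval.mul_mem (0:I).2 t.2⟩ : I) = 0 := by
      apply Subtype.ext; simp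
    rw [this, hr0 b]

lemma Phi_one (r : C(I × B, I × B)) (z : I × B) : Phi r (1, z) = r z := by
  obtain ⟨t, b⟩ := z
  apply Prod.ext
  · apply Subtype.ext
    show (1 - ((1:I) : ℝ)) * t + ((1:I) : ℝ) * _ = _
    simp
  · show (r (⟨((1:I) : ℝ) * (t : ℝ), _⟩, b)).2 = _
    have : (⟨((1:I) : ℝ) * (t : ℝ), unitInterval.mul_mem (1:I).2 t.2⟩ : I) = t := by
      apply Subtype.ext; simp
    rw [this]

lemma Phi_fix₁ (r : C(I × B, I × B)) (hr0 : ∀ b : B, r (0, b) = (0, b)) (l : I) (b : B) :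
    Phi r (l, ((0 : I), b)) = ((0 : I), b) := by
  apply Prod.ext
  · apply Subtype.ext
    show (1 - (l : ℝ)) * ((0:I) : ℝ) + (l : ℝ) * ((r ((0:I), b)).1 : ℝ) = (((0:I)) : ℝ)
    rw [hr0 b]
    simp
  · show (r (⟨(l : ℝ) * ((0:I) : ℝ), _⟩, b)).2 = b
    have : (⟨(l : ℝ) * ((0:I) : ℝ), unitInterval.mul_mem l.2 (0:I).2⟩ : I) = 0 := by
      apply Subtype.ext; simp
    rw [this, hr0 b]

lemma Phi_fix₂ (r : C(I × B, I × B)) (b : B) (hfix : ∀ s : I, r (s, b) = (s, b))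
    (l t : I) : Phi r (l, (t, b)) = (t, b) := by
  apply Prod.ext
  · apply Subtype.ext
    show (1 - (l : ℝ)) * (t : ℝ) + (l : ℝ) * ((r (t, b)).1 : ℝ) = (t : ℝ)
    rw [hfix t]
    ring
  · show (r (⟨(l : ℝ) * (t : ℝ), _⟩, b)).2 = b
    rw [hfix _]

noncomputable def sg (r : C(I × B, I × B)) (q : I × (I × B)) : ℝ :=
  max 0 (min 1 (((q.1 : ℝ) - 1 + th r q.2) / th r q.2))

lemma sg_mem (r : C(I × B, I × B)) (q : I × (I × B)) : sg r q ∈ I :=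
  Set.mem_Icc.mpr ⟨le_max_left _ _, max_le zero_le_one (min_le_left _ _)⟩

noncomputable def hh (r : C(I × B, I × B)) (q : I × (I × B)) : I × B :=
  Phi r (⟨sg r q, sg_mem r q⟩, q.2)

lemma sg_eq_zero_of_num_eq_zero (r : C(I × B, I × B)) (q : I × (I × B))
    (h : (q.1 : ℝ) - 1 + th r q.2 = 0) : sg r q = 0 := by
  rw [sg, h, zero_div]
  norm_num

lemma sg_eq_one (r : C(I × B, I × B)) (q : I × (I × B)) (h1 : (q.1 : ℝ) = 1)
    (h2 : th r q.2 ≠ 0) : sg r q = 1 := by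
  rw [sg, h1]
  rw [show (1 : ℝ) - 1 + th r q.2 = th r q.2 by ring, div_self h2]
  norm_num

lemma hh_continuous (r : C(I × B, I × B))
    (hfix0 : ∀ z, th r z = 0 → ∀ l : I, Phi r (l, z) = z) : Continuous (hh r) := by
  rw [continuous_iff_continuousAt]
  rintro ⟨s₀, z₀⟩
  by_cases hz : th r z₀ = 0
  · have hval : hh r (s₀, z₀) = z₀ := hfix0 z₀ hz _
    rw [ContinuousAt, hval, Filter.tendsto_def]
    intro N hN
    obtain ⟨N', hN'sub, hN'open, hz₀N'⟩ := mem_nhds_iff.mp hN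
    have hsub : (Set.univ : Set I) ×ˢ ({z₀} : Set (I × B)) ⊆ Phi r ⁻¹' N' := by
      rintro ⟨l, z⟩ ⟨-, hz'⟩
      simp only [Set.mem_singleton_iff] at hz'
      subst hz'
      simp only [Set.mem_preimage]
      rw [hfix0 z hz l]
      exact hz₀N'
    obtain ⟨U, V, hUo, hVo, hUuniv, hVz, hUV⟩ := generalized_tube_lemma isCompact_univ
      isCompact_singleton (hN'open.preimage (Phi_continuous r)) hsub
    rw [nhds_prod_eq]
    apply Filter.mem_of_superset
      (Filter.prod_mem_prod Filter.univ_mem (hVo.mem_nhds (hVz rfl)))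
    rintro ⟨s, z⟩ ⟨-, hzV⟩
    exact hN'sub (hUV ⟨hUuniv (Set.mem_univ _), hzV⟩)
  · have hcsg : ContinuousAt (fun q : I × (I × B) => sg r q) (s₀, z₀) := by
      have hdiv : ContinuousAt
          (fun q : I × (I × B) => ((q.1 : ℝ) - 1 + th r q.2) / th r q.2) (s₀, z₀) := by
        apply ContinuousAt.div
        · exact (((continuous_subtype_val.comp continuous_fst).sub continuous_const).add
            ((th_continuous r).comp continuous_snd)).continuousAt
        · exact ((th_continuous r).comp continuous_snd).continuousAt
        · exact hz
      exact ((continuous_const.max (continuous_const.min continuous_id)).continuousAt).comp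
        hdiv
    have heq : hh r = fun q : I × (I × B) => Phi r (pjI (sg r q), q.2) := by
      funext q
      rw [hh]
      have hpj : pjI (sg r q) = ⟨sg r q, sg_mem r q⟩ :=
        Subtype.ext (pjI_coe (sg_mem r q).1 (sg_mem r q).2)
      rw [hpj]
    rw [heq]
    exact (Phi_continuous r).continuousAt.comp
      (((continuous_pjI.continuousAt).comp hcsg).prodMk continuousAt_snd)

end Deform

end HLEPAux

open Set Topology MeasureTheory Filter in
/-- The homotopy lifting extension property: if `p` is a Hurewicz fibration and
`i : A → B` is a closed Hurewicz cofibration, then every map defined on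
`(I × A) ∪ ({0} × B)` (given here by its two compatible pieces `F` on `I × A` and
`f₀` on `{0} × B`) lifting the restriction of `G : I × B → Y` extends to a lift
`H : I × B → X` of `G`. -/
theorem homotopy_lifting_extension {A B X Y : Type} [TopologicalSpace A]
    [TopologicalSpace B] [TopologicalSpace X] [TopologicalSpace Y]
    (p : C(X, Y)) (hp : IsHurewiczFibration p)
    (i : C(A, B)) (hclosed : Topology.IsClosedEmbedding i) (hcof : IsHurewiczCofibration i)
    (F : C(I × A, X)) (f₀ : C(B, X)) (G : C(I × B, Y))
    (hcompat : ∀ a, F (0, a) = f₀ (i a))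
    (hF : ∀ t a, p (F (t, a)) = G (t, i a))
    (hf₀ : ∀ b, p (f₀ b) = G (0, b)) :
    ∃ H : C(I × B, X), (∀ b, H (0, b) = f₀ b) ∧ (∀ t a, H (t, i a) = F (t, a)) ∧
      ∀ t b, p (H (t, b)) = G (t, b) := by
  classical
  -- Step 1: a retraction of `I × B` onto `Mset i`, from the cofibration property.
  obtain ⟨r', hr'0, hr'i⟩ := hcof (↥(Mset i))
    ⟨fun b => ⟨((0 : I), b), Or.inl rfl⟩,
      Continuous.subtype_mk (continuous_const.prodMk continuous_id) _⟩
    ⟨fun q => ⟨(q.1, i q.2), Or.inr ⟨q.2, rfl⟩⟩,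
      Continuous.subtype_mk (continuous_fst.prodMk (i.continuous.comp continuous_snd)) _⟩
    (fun a => Subtype.ext rfl)
  set r : C(I × B, I × B) :=
    ⟨fun z => ((r' z : ↥(Mset i)) : I × B), continuous_subtype_val.comp r'.continuous⟩
    with hrdef
  have hr0 : ∀ b : B, r ((0 : I), b) = ((0 : I), b) :=
    fun b => congrArg Subtype.val (hr'0 b)
  have hri : ∀ (t : I) (a : A), r (t, i a) = (t, i a) :=
    fun t a => congrArg Subtype.val (hr'i t a)
  have hrM : ∀ z, r z ∈ Mset i := fun z => (r' z).2
  -- Step 2: properties of the Strøm function `uu r`.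
  have hui : ∀ a : A, uu r (i a) = 0 := fun a => uu_eq_zero_of_fix r (i a) fun t => hri t a
  have humem : ∀ b : B, uu r b = 0 → b ∈ Set.range i := by
    intro b hb
    have hle := uu_le_of_eq_zero r b hb
    have h2 : ∀ t : I, (t : ℝ) ≠ 0 → (r (t, b)).2 ∈ Set.range i := by
      intro t ht
      rcases hrM (t, b) with h | h
      · exfalso
        apply ht
        have h0 : ((r (t, b)).1 : ℝ) = 0 := by rw [h]; rfl
        have := hle t
        have := t.2.1
        linarith
      · exact h
    have hseq : Filter.Tendsto (fun n : ℕ => (r (pjI (1 / (n + 1)), b)).2)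
        Filter.atTop (𝓝 b) := by
      have h1 : Filter.Tendsto (fun n : ℕ => (1 : ℝ) / (n + 1)) Filter.atTop (𝓝 0) :=
        tendsto_one_div_add_atTop_nhds_zero_nat
      have h2' : Filter.Tendsto (fun n : ℕ => pjI ((1 : ℝ) / (n + 1))) Filter.atTop
          (𝓝 (pjI 0)) := (continuous_pjI.tendsto 0).comp h1
      have hpj0 : pjI 0 = 0 := Subtype.ext (pjI_coe le_rfl zero_le_one)
      rw [hpj0] at h2'
      have h3 : Filter.Tendsto (fun n : ℕ => r (pjI ((1 : ℝ) / (n + 1)), b)) Filter.atTop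
          (𝓝 (r ((0 : I), b))) :=
        (r.continuous.tendsto _).comp (h2'.prodMk_nhds tendsto_const_nhds)
      rw [hr0 b] at h3
      exact (continuous_snd.tendsto _).comp h3
    apply hclosed.isClosed_range.mem_of_tendsto hseq
    apply Filter.Eventually.of_forall
    intro n
    apply h2
    have hle1 : (1 : ℝ) / (n + 1) ≤ 1 := by
      rw [div_le_one (by positivity)]
      have : (0 : ℝ) ≤ n := Nat.cast_nonneg n
      linarith
    have hpos : (0 : ℝ) < 1 / (n + 1) := by positivity
    rw [pjI_coe hpos.le hle1]
    exact hpos.ne'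
  -- Step 3: `Phi` fixes `Mset i` and `th` vanishes exactly on it.
  have hfixM : ∀ z ∈ Mset i, ∀ l : I, Phi r (l, z) = z := by
    rintro ⟨t, b⟩ hz l
    rcases hz with h | ⟨a, rfl⟩
    · have ht : t = 0 := h
      rw [ht]
      exact Phi_fix₁ r hr0 l b
    · exact Phi_fix₂ r (i a) (fun s => hri s a) l t
  have hth0 : ∀ z, th r z = 0 → z ∈ Mset i := by
    rintro ⟨t, b⟩ h
    rw [th] at h
    by_cases ht : (t : ℝ) ≤ uu r b
    · rw [min_eq_left ht] at h
      exact Or.inl (Subtype.ext h)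
    · rw [min_eq_right (le_of_not_ge ht)] at h
      exact Or.inr (humem b h)
  have hthM : ∀ z ∈ Mset i, th r z = 0 := by
    rintro ⟨t, b⟩ hz
    rcases hz with h | ⟨a, rfl⟩
    · have ht : t = 0 := h
      rw [th, ht]
      show min ((0 : I) : ℝ) (uu r b) = 0
      rw [show ((0 : I) : ℝ) = 0 from rfl]
      exact min_eq_left (uu_nonneg r b)
    · rw [th]
      show min (t : ℝ) (uu r (i a)) = 0
      rw [hui a]
      exact min_eq_right t.2.1
  have hfix0 : ∀ z, th r z = 0 → ∀ l : I, Phi r (l, z) = z :=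
    fun z hz l => hfixM z (hth0 z hz) l
  have hhc : Continuous (hh r) := hh_continuous r hfix0
  -- Key properties of the deformation `hh`.
  have hP3 : ∀ (s : I) (z), z ∈ Mset i → hh r (s, z) = z := fun s z hz => hfixM z hz _
  have hP1 : ∀ z, hh r (1, z) ∈ Mset i := by
    intro z
    by_cases hz : th r z = 0
    · rw [hP3 1 z (hth0 z hz)]
      exact hth0 z hz
    · rw [hh]
      have hs : (⟨sg r (1, z), sg_mem r (1, z)⟩ : I) = 1 :=
        Subtype.ext (sg_eq_one r (1, z) rfl hz)
      rw [hs, Phi_one]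
      exact hrM z
  set thI : C(I × B, I) :=
    ⟨fun z => ⟨th r z, Set.mem_Icc.mpr ⟨th_nonneg r z, th_le_one r z⟩⟩,
      Continuous.subtype_mk (th_continuous r) _⟩ with hthIdef
  have hP2 : ∀ z, hh r (σ (thI z), z) = z := by
    intro z
    have hnum : ((σ (thI z) : I) : ℝ) - 1 + th r (σ (thI z), z).2 = 0 := by
      rw [coe_symm_eq]
      show 1 - th r z - 1 + th r z = 0
      ring
    rw [hh]
    have hs : (⟨sg r (σ (thI z), z), sg_mem r (σ (thI z), z)⟩ : I) = 0 :=
      Subtype.ext (sg_eq_zero_of_num_eq_zero r _ hnum)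
    rw [hs]
    exact Phi_zero r hr0 z
  -- Step 4: the partial lift on `Mset i`.
  set ψ : I × B → X :=
    fun z => if hz : z.2 ∈ Set.range i then F (z.1, hz.choose) else f₀ z.2 with hψdef
  have hψi : ∀ (t : I) (a : A), ψ (t, i a) = F (t, a) := by
    intro t a
    have hb : i a ∈ Set.range i := ⟨a, rfl⟩
    rw [hψdef]
    dsimp only
    rw [dif_pos hb]
    have : hb.choose = a := hclosed.injective hb.choose_spec
    rw [this]
  have hψ0 : ∀ b : B, ψ ((0 : I), b) = f₀ b := by
    intro b
    rw [hψdef]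
    dsimp only
    by_cases hb : b ∈ Set.range i
    · rw [dif_pos hb, hcompat, hb.choose_spec]
    · rw [dif_neg hb]
  have hψp : ∀ z ∈ Mset i, p (ψ z) = G z := by
    rintro ⟨t, b⟩ hz
    rw [hψdef]
    dsimp only
    by_cases hb : b ∈ Set.range i
    · rw [dif_pos hb, hF, hb.choose_spec]
    · rcases hz with h | h
      · have ht : t = 0 := h
        rw [dif_neg hb, ht, hf₀]
      · exact absurd h hb
  -- Continuity of `ψ` on `Mset i`.
  have hc₀ : ContinuousOn ψ {z : I × B | z.1 = 0} := by
    apply ContinuousOn.congr ((f₀.continuous.comp continuous_snd).continuousOn)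
    rintro ⟨t, b⟩ ht
    have ht' : t = 0 := ht
    show ψ (t, b) = f₀ b
    rw [ht', hψ0]
  have hc₁ : ContinuousOn ψ {z : I × B | z.2 ∈ Set.range i} := by
    rw [continuousOn_iff_continuous_restrict]
    have hrest : ({z : I × B | z.2 ∈ Set.range i}).domRestrict ψ =
        fun z : ↥{z : I × B | z.2 ∈ Set.range i} =>
          F (z.1.1, (hclosed.toIsEmbedding.toHomeomorph).symm
            ⟨z.1.2, z.2⟩) := by
      funext z
      obtain ⟨⟨t, b⟩, hb⟩ := z
      show ψ (t, b) = _
      have hb' : b ∈ Set.range i := hb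
      rw [hψdef]
      dsimp only
      rw [dif_pos hb']
      have h1 : i hb'.choose = b := hb'.choose_spec
      have h2 : i ((hclosed.toIsEmbedding.toHomeomorph).symm ⟨b, hb⟩) = b :=
        congrArg Subtype.val
          ((hclosed.toIsEmbedding.toHomeomorph).apply_symm_apply ⟨b, hb⟩)
      exact congrArg (fun a => F (t, a)) (hclosed.injective (h1.trans h2.symm))
    rw [hrest]
    exact F.continuous.comp ((continuous_fst.comp continuous_subtype_val).prodMk
      ((hclosed.toIsEmbedding.toHomeomorph).symm.continuous.comp
        (Continuous.subtype_mk (continuous_snd.comp continuous_subtype_val) _)))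
  have hS₀c : IsClosed {z : I × B | z.1 = 0} := isClosed_eq continuous_fst continuous_const
  have hS₁c : IsClosed {z : I × B | z.2 ∈ Set.range i} :=
    hclosed.isClosed_range.preimage continuous_snd
  have hψcont : ContinuousOn ψ (Mset i) := by
    have hMeq : Mset i = {z : I × B | z.1 = 0} ∪ {z : I × B | z.2 ∈ Set.range i} := rfl
    rw [hMeq]
    intro z hz
    by_cases h0 : z ∈ {z : I × B | z.1 = 0} <;>
      by_cases h1 : z ∈ {z : I × B | z.2 ∈ Set.range i}
    · exact (hc₀ z h0).union (hc₁ z h1)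
    · have w1 : ContinuousWithinAt ψ {z : I × B | z.2 ∈ Set.range i} z :=
        continuousWithinAt_of_notMem_closure (by rwa [hS₁c.closure_eq])
      exact (hc₀ z h0).union w1
    · have w0 : ContinuousWithinAt ψ {z : I × B | z.1 = 0} z :=
        continuousWithinAt_of_notMem_closure (by rwa [hS₀c.closure_eq])
      exact w0.union (hc₁ z h1)
    · rcases hz with h | h
      · exact absurd h h0
      · exact absurd h h1
  -- Step 5: apply the fibration property.
  set f' : C(I × B, X) :=
    ⟨fun z => (Mset i).restrict ψ ⟨hh r (1, z), hP1 z⟩,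
      (continuousOn_iff_continuous_restrict.mp hψcont).comp
        (Continuous.subtype_mk (hhc.comp (continuous_const.prodMk continuous_id)) _)⟩
    with hf'def
  set k : C(I × (I × B), Y) :=
    ⟨fun q => G (hh r (σ q.1, q.2)),
      G.continuous.comp (hhc.comp
        ((unitInterval.continuous_symm.comp continuous_fst).prodMk continuous_snd))⟩
    with hkdef
  have hcompat' : ∀ z, p (f' z) = k (0, z) := by
    intro z
    show p (ψ (hh r (1, z))) = G (hh r (σ (0 : I), z))
    rw [symm_zero]
    exact hψp _ (hP1 z)
  obtain ⟨L, hL0, hLp⟩ := hp (I × B) k f' hcompat'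
  refine ⟨⟨fun z => L (thI z, z), L.continuous.comp (thI.continuous.prodMk continuous_id)⟩,
    ?_, ?_, ?_⟩
  · intro b
    show L (thI ((0 : I), b), ((0 : I), b)) = f₀ b
    have h1 : thI ((0 : I), b) = 0 := by
      apply Subtype.ext
      show min (((0 : I)) : ℝ) (uu r b) = ((0 : I) : ℝ)
      rw [show ((0 : I) : ℝ) = 0 from rfl]
      exact min_eq_left (uu_nonneg r b)
    rw [h1, hL0]
    show ψ (hh r (1, ((0 : I), b))) = f₀ b
    rw [hP3 1 ((0 : I), b) (Or.inl rfl), hψ0]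
  · intro t a
    show L (thI (t, i a), (t, i a)) = F (t, a)
    have h1 : thI (t, i a) = 0 := by
      apply Subtype.ext
      show min ((t : I) : ℝ) (uu r (i a)) = ((0 : I) : ℝ)
      rw [hui a, show ((0 : I) : ℝ) = 0 from rfl]
      exact min_eq_right t.2.1
    rw [h1, hL0]
    show ψ (hh r (1, (t, i a))) = F (t, a)
    rw [hP3 1 (t, i a) (Or.inr ⟨a, rfl⟩), hψi]
  · intro t b
    show p (L (thI (t, b), (t, b))) = G (t, b)
    rw [hLp]
    show G (hh r (σ (thI (t, b)), (t, b))) = G (t, b)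
    rw [hP2 (t, b)]
end
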